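/- arXiv:1103.5227 — 2 statements merged into one kernel-verified Lean document; each statement's English description precedes it below -/
import Mathlib

section
/- As formal power series, ∏_{n≥1} (1−x^{2n})⁵ / ((1−x^n)² (1−x^{4n})²) = 1 + 2 Σ_{n≥1} x^{n²}. -/
/-!
Since `(1 - x^{2k})⁴ / ((1 - x^k)² (1 - x^{4k})²) = (1 + x^k)² / (1 + x^{2k})²` and
`∏ (1 + x^k) / ∏ (1 + x^{2k}) = ∏ (1 + x^{2k-1})`, the product is
`∏ (1 - x^{2k}) (1 + x^{2k-1})²`, which Jacobi's triple product evaluates to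
`∑_{m ∈ ℤ} x^{m²}`. Only coefficients up to `xⁿ` matter, so it suffices to use the finite
triple product `∏_{k<n} (1 + x^{2k+1})² = ∑_{|j| ≤ n} [2n, n+j]_{x²} x^{j²}`, a consequence of
the `q`-binomial theorem, together with `(x²; x²)_n [2n, n+j]_{x²} ≡ 1 mod x^{2(n-|j|+1)}`,
which follows from `(q; q)_{N-r} [N, r]_q = ∏_{r < i ≤ N} (1 - q^i)`.
-/

open PowerSeries Finset

lemma dvd_prod_sub_one {R ι : Type*} [CommRing R] {a : R} {s : Finset ι} {g : ι → R}
    (h : ∀ i ∈ s, a ∣ g i - 1) : a ∣ ∏ i ∈ s, g i - 1 := by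
  simp_rw [← Ideal.mem_span_singleton, ← Ideal.Quotient.mk_eq_mk_iff_sub_mem, map_one] at h ⊢
  rw [map_prod]
  exact prod_eq_one h

lemma prod_Ioc_two_mul {M : Type*} [CommMonoid M] (f : ℕ → M) (n : ℕ) :
    ∏ k ∈ Ioc 0 (2 * n), f k =
      (∏ k ∈ Ioc 0 n, f (2 * k)) * ∏ k ∈ range n, f (2 * k + 1) := by
  induction n with
  | zero => simp
  | succ n ih =>
    rw [show 2 * (n + 1) = 2 * n + 1 + 1 by ring, prod_Ioc_succ_top (by omega),
      prod_Ioc_succ_top (by omega), ih, prod_Ioc_succ_top (by omega), prod_range_succ,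
      show 2 * (n + 1) = 2 * n + 1 + 1 by ring]
    ac_rfl

lemma card_filter_natAbs_sub_sq_eq {n : ℕ} (hn : 0 < n) :
    #{r ∈ range (2 * n + 1) | Int.natAbs (((r : ℕ) : ℤ) - n) ^ 2 = n} =
      if IsSquare n then 2 else 0 := by
  split_ifs with hsq
  · obtain ⟨t, ht⟩ := hsq
    have htn : t ≤ n := ht ▸ Nat.le_mul_self t
    have ht0 : 0 < t := Nat.pos_of_ne_zero fun h => by simp [h] at ht; omega
    have hsqrt : ∀ m : ℕ, m ^ 2 = n ↔ m = t := fun m => by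
      rw [ht, ← sq, pow_left_inj₀ m.zero_le t.zero_le two_ne_zero]
    have hfilter : {r ∈ range (2 * n + 1) | Int.natAbs (((r : ℕ) : ℤ) - n) ^ 2 = n} =
        {n - t, n + t} := by
      ext r
      simp only [mem_filter, mem_range, mem_insert, mem_singleton, hsqrt]
      omega
    rw [hfilter, card_pair (by omega)]
  · rw [card_eq_zero, filter_eq_empty_iff]
    exact fun r _ h => hsq ⟨_, by rw [← h, sq]⟩

section GaussBinom

variable {R : Type*} [CommRing R] (q : R)

def qPochhammer (m : ℕ) : R := ∏ k ∈ Ioc 0 m, (1 - q ^ k)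

def gaussBinom : ℕ → ℕ → R
  | _, 0 => 1
  | 0, _ + 1 => 0
  | N + 1, r + 1 => gaussBinom N (r + 1) + q ^ (N - r) * gaussBinom N r

lemma qPochhammer_succ (m : ℕ) : qPochhammer q (m + 1) = qPochhammer q m * (1 - q ^ (m + 1)) :=
  prod_Ioc_succ_top (Nat.zero_le m) _

@[simp] lemma gaussBinom_zero_right (N : ℕ) : gaussBinom q N 0 = 1 := by
  cases N <;> rfl

lemma gaussBinom_succ_succ (N r : ℕ) :
    gaussBinom q (N + 1) (r + 1) = gaussBinom q N (r + 1) + q ^ (N - r) * gaussBinom q N r :=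
  rfl

lemma gaussBinom_of_lt {N r : ℕ} (h : N < r) : gaussBinom q N r = 0 := by
  induction N generalizing r with
  | zero => obtain ⟨r, rfl⟩ := Nat.exists_eq_add_one_of_ne_zero (by omega : r ≠ 0); rfl
  | succ N ih =>
    obtain ⟨r, rfl⟩ := Nat.exists_eq_add_one_of_ne_zero (by omega : r ≠ 0)
    rw [gaussBinom_succ_succ, ih (by omega), ih (by omega), mul_zero, add_zero]

@[simp] lemma gaussBinom_self (N : ℕ) : gaussBinom q N N = 1 := by
  induction N with
  | zero => rfl
  | succ N ih => rw [gaussBinom_succ_succ, gaussBinom_of_lt q (by omega), ih, Nat.sub_self]; simp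

theorem prod_add_mul_pow_eq_sum_gaussBinom (x y : R) (N : ℕ) :
    ∏ k ∈ range N, (x + y * q ^ k) =
      ∑ r ∈ range (N + 1), gaussBinom q N r * q ^ r.choose 2 * x ^ (N - r) * y ^ r := by
  induction N with
  | zero => simp
  | succ N ih =>
    have hx : ∑ r ∈ range (N + 2), gaussBinom q N r * q ^ r.choose 2 * x ^ (N + 1 - r) * y ^ r =
        (∑ r ∈ range (N + 1), gaussBinom q N r * q ^ r.choose 2 * x ^ (N - r) * y ^ r) * x := by
      rw [sum_range_succ _ (N + 1), gaussBinom_of_lt q (by omega), sum_mul]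
      simp only [zero_mul, add_zero]
      refine sum_congr rfl fun r hr => ?_
      rw [show N + 1 - r = N - r + 1 by grind, pow_succ]
      ring
    have hy : ∑ r ∈ range (N + 1), q ^ (N - r) * gaussBinom q N r * q ^ (r + 1).choose 2 *
          x ^ (N - r) * y ^ (r + 1) =
        (∑ r ∈ range (N + 1), gaussBinom q N r * q ^ r.choose 2 * x ^ (N - r) * y ^ r) *
          (y * q ^ N) := by
      rw [sum_mul]
      refine sum_congr rfl fun r hr => ?_
      have hexp : q ^ (N - r) * q ^ (r + 1).choose 2 = q ^ N * q ^ r.choose 2 := by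
        rw [← pow_add, ← pow_add, Nat.choose_succ_succ', Nat.choose_one_right]
        congr 1
        grind
      linear_combination (gaussBinom q N r * x ^ (N - r) * y ^ (r + 1)) * hexp
    rw [prod_range_succ, ih, mul_add, ← hx, ← hy, sum_range_succ' _ (N + 1),
      sum_range_succ' _ (N + 1)]
    simp only [gaussBinom_succ_succ, add_mul, sum_add_distrib, gaussBinom_zero_right,
      Nat.add_sub_add_right]
    ring

theorem qPochhammer_mul_gaussBinom {N r : ℕ} (h : r ≤ N) :
    qPochhammer q (N - r) * gaussBinom q N r = ∏ i ∈ Ioc r N, (1 - q ^ i) := by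
  induction N generalizing r with
  | zero =>
    obtain rfl : r = 0 := by omega
    simp [qPochhammer]
  | succ N ih =>
    rcases r with _ | r
    · simp [qPochhammer]
    rcases (Nat.succ_le_succ_iff.mp h).eq_or_lt with rfl | hr
    · simp [qPochhammer]
    obtain ⟨m, rfl⟩ : ∃ m, N = r + 1 + m := ⟨N - (r + 1), by omega⟩
    have h1 := ih (r := r + 1) (by omega)
    have h2 := ih (r := r) (by omega)
    rw [show r + 1 + m - (r + 1) = m by omega] at h1
    rw [show r + 1 + m - r = m + 1 by omega, qPochhammer_succ,
      ← prod_Ioc_consecutive _ (Nat.le_succ r) (by omega), Nat.Ioc_succ_singleton,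
      prod_singleton] at h2
    rw [show r + 1 + m + 1 - (r + 1) = m + 1 by omega, qPochhammer_succ, gaussBinom_succ_succ,
      prod_Ioc_succ_top (by omega), show r + 1 + m - r = m + 1 by omega]
    have hq : q ^ (m + 1) * q ^ (r + 1) = q ^ (r + 1 + m + 1) := by rw [← pow_add]; ring_nf
    linear_combination (1 - q ^ (m + 1)) * h1 + q ^ (m + 1) * h2 -
      (∏ i ∈ Ioc (r + 1) (r + 1 + m), (1 - q ^ i)) * hq

theorem qPochhammer_mul_qPochhammer_mul_gaussBinom {N r : ℕ} (h : r ≤ N) :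
    qPochhammer q r * qPochhammer q (N - r) * gaussBinom q N r = qPochhammer q N := by
  rw [mul_assoc, qPochhammer_mul_gaussBinom q h, qPochhammer,
    prod_Ioc_consecutive _ (Nat.zero_le r) h]
  rfl

variable {q}

lemma qPochhammer_ne_zero [IsDomain R] (hq : ¬IsOfFinOrder q) (m : ℕ) : qPochhammer q m ≠ 0 :=
  prod_ne_zero_iff.mpr fun k hk => sub_ne_zero.mpr fun h =>
    hq (isOfFinOrder_iff_pow_eq_one.mpr ⟨k, (mem_Ioc.mp hk).1, h.symm⟩)

theorem gaussBinom_symm [IsDomain R] (hq : ¬IsOfFinOrder q) {N r : ℕ} (h : r ≤ N) :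
    gaussBinom q N (N - r) = gaussBinom q N r := by
  have h1 := qPochhammer_mul_qPochhammer_mul_gaussBinom q h
  have h2 := qPochhammer_mul_qPochhammer_mul_gaussBinom q (Nat.sub_le N r)
  rw [Nat.sub_sub_self h, mul_comm (qPochhammer q (N - r))] at h2
  exact mul_left_cancel₀ (mul_ne_zero (qPochhammer_ne_zero hq _) (qPochhammer_ne_zero hq _))
    (h2.trans h1.symm)

end GaussBinom

section JacobiTripleProduct

variable {R : Type*} [CommRing R]

lemma prod_pow_add_pow_eq (t : R) (n : ℕ) :
    ∏ k ∈ range (2 * (n + 1)), (t ^ (2 * n + 1) + (t ^ 2) ^ k) =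
      t ^ ((n + 1) * n + (n + 1) * (2 * n + 1)) *
        (∏ k ∈ range (n + 1), (1 + t ^ (2 * k + 1))) ^ 2 := by
  have hlow : ∏ k ∈ range (n + 1), (t ^ (2 * n + 1) + (t ^ 2) ^ k) =
      t ^ ((n + 1) * n) * ∏ k ∈ range (n + 1), (1 + t ^ (2 * k + 1)) := by
    have h : ∀ k ∈ range (n + 1), t ^ (2 * n + 1) + (t ^ 2) ^ k =
        t ^ (2 * k) * (1 + t ^ (2 * (n + 1 - 1 - k) + 1)) := fun k hk => by
      rw [← pow_mul, mul_add, mul_one, ← pow_add, add_comm]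
      congr 2
      grind
    rw [prod_congr rfl h, prod_mul_distrib, prod_pow_eq_pow_sum, ← mul_sum, mul_comm 2,
      sum_range_id_mul_two, prod_range_reflect (fun k => 1 + t ^ (2 * k + 1)), Nat.add_sub_cancel,
      mul_comm]
  have hhigh : ∏ k ∈ range (n + 1), (t ^ (2 * n + 1) + (t ^ 2) ^ (n + 1 + k)) =
      t ^ ((n + 1) * (2 * n + 1)) * ∏ k ∈ range (n + 1), (1 + t ^ (2 * k + 1)) := by
    have h : ∀ k ∈ range (n + 1), t ^ (2 * n + 1) + (t ^ 2) ^ (n + 1 + k) =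
        t ^ (2 * n + 1) * (1 + t ^ (2 * k + 1)) := fun k _ => by ring
    rw [prod_congr rfl h, prod_mul_distrib, prod_const, card_range, ← pow_mul,
      mul_comm (2 * n + 1)]
  rw [two_mul, prod_range_add, hlow, hhigh, pow_add]
  ring

/-- The finite form of Jacobi's triple product identity, at `z = 1`. -/
theorem prod_one_add_pow_sq_eq_sum_gaussBinom [IsDomain R] {t : R} (ht : t ≠ 0) (n : ℕ) :
    (∏ k ∈ range n, (1 + t ^ (2 * k + 1))) ^ 2 =
      ∑ r ∈ range (2 * n + 1),
        gaussBinom (t ^ 2) (2 * n) r * t ^ Int.natAbs ((r : ℤ) - n) ^ 2 := by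
  rcases n with _ | n
  · simp
  have hexp : ∀ r ∈ range (2 * (n + 1) + 1),
      2 * r.choose 2 + (2 * n + 1) * (2 * (n + 1) - r) =
        (n + 1) * n + (n + 1) * (2 * n + 1) + Int.natAbs ((r : ℤ) - (n + 1 : ℕ)) ^ 2 := by
    intro r hr
    rw [Nat.choose_two_right, Nat.mul_div_cancel' (Nat.even_mul_pred_self r).two_dvd]
    zify [show r ≤ 2 * (n + 1) by grind]
    rw [sq_abs]
    rcases r with _ | r <;> push_cast <;> ring
  have h := prod_add_mul_pow_eq_sum_gaussBinom (t ^ 2) (t ^ (2 * n + 1)) 1 (2 * (n + 1))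
  simp only [one_mul, one_pow, mul_one] at h
  rw [prod_pow_add_pow_eq] at h
  rw [← mul_right_inj' (pow_ne_zero _ ht), h, mul_sum]
  refine sum_congr rfl fun r hr => ?_
  rw [mul_assoc, ← pow_mul, ← pow_mul, ← pow_add, hexp r hr, pow_add]
  ring

end JacobiTripleProduct

namespace PowerSeries

section CommRing

variable {R : Type*} [CommRing R]

lemma coeff_eq_of_X_pow_dvd_sub {f g : R⟦X⟧} {n : ℕ} (h : X ^ (n + 1) ∣ f - g) :
    coeff n f = coeff n g := by
  rw [← sub_eq_zero, ← map_sub]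
  exact X_pow_dvd_iff.mp h n (Nat.lt_succ_self n)

lemma coeff_mul_eq_of_X_pow_dvd_sub_one {f g : R⟦X⟧} {n : ℕ} (h : X ^ (n + 1) ∣ g - 1) :
    coeff n (f * g) = coeff n f :=
  coeff_eq_of_X_pow_dvd_sub (by simpa [mul_sub] using h.mul_left f)

lemma constantCoeff_one_add_X_pow {m : ℕ} (hm : m ≠ 0) :
    constantCoeff (1 + X ^ m : R⟦X⟧) = 1 := by
  simp [zero_pow hm]

lemma constantCoeff_one_sub_X_pow {m : ℕ} (hm : m ≠ 0) :
    constantCoeff (1 - X ^ m : R⟦X⟧) = 1 := by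
  simp [zero_pow hm]

lemma not_isOfFinOrder_X_pow [Nontrivial R] {k : ℕ} (hk : k ≠ 0) :
    ¬IsOfFinOrder (X ^ k : R⟦X⟧) := by
  rw [isOfFinOrder_iff_pow_eq_one]
  rintro ⟨m, hm, h⟩
  simpa [← pow_mul, zero_pow (mul_ne_zero hk hm.ne')] using congr_arg constantCoeff h

lemma X_pow_dvd_prod_one_sub_X_pow_sub_one {ι : Type*} {m : ℕ} {s : Finset ι} {e : ι → ℕ}
    (h : ∀ i ∈ s, m ≤ e i) : (X : R⟦X⟧) ^ m ∣ ∏ i ∈ s, (1 - X ^ e i) - 1 :=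
  dvd_prod_sub_one fun i hi => by simpa using pow_dvd_pow X (h i hi)

lemma X_pow_dvd_prod_Ioc_one_add_X_pow_sq_sub_one (n : ℕ) :
    (X : R⟦X⟧) ^ (n + 1) ∣ (∏ j ∈ Ioc n (2 * n), (1 + X ^ j)) ^ 2 - 1 := by
  have h : (X : R⟦X⟧) ^ (n + 1) ∣ ∏ j ∈ Ioc n (2 * n), (1 + X ^ j) - 1 :=
    dvd_prod_sub_one fun j hj => by simpa using pow_dvd_pow X (mem_Ioc.mp hj).1
  rw [sq, mul_self_sub_one]
  exact h.mul_left _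

lemma X_pow_dvd_qPochhammer_mul_gaussBinom_add_sub_one {n d : ℕ} (hd : d ≤ n) :
    (X : R⟦X⟧) ^ (2 * (n - d + 1)) ∣
      qPochhammer (X ^ 2) n * gaussBinom (X ^ 2) (2 * n) (n + d) - 1 := by
  have h := qPochhammer_mul_gaussBinom (X ^ 2 : R⟦X⟧) (show n + d ≤ 2 * n by omega)
  rw [show 2 * n - (n + d) = n - d by omega] at h
  have hsplit : qPochhammer (X ^ 2 : R⟦X⟧) n =
      qPochhammer (X ^ 2) (n - d) * ∏ i ∈ Ioc (n - d) n, (1 - (X ^ 2) ^ i) :=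
    (prod_Ioc_consecutive _ (Nat.zero_le _) (Nat.sub_le n d)).symm
  have hdisj : Disjoint (Ioc (n + d) (2 * n)) (Ioc (n - d) n) := by
    simp only [disjoint_left, mem_Ioc]
    omega
  rw [hsplit, mul_right_comm, h, ← prod_union hdisj]
  simp_rw [← pow_mul]
  exact X_pow_dvd_prod_one_sub_X_pow_sub_one fun i hi => by
    simp only [mem_union, mem_Ioc] at hi
    omega

variable [IsDomain R]

lemma X_pow_dvd_qPochhammer_mul_gaussBinom_sub_one {n r : ℕ} (hr : r ≤ 2 * n) :
    (X : R⟦X⟧) ^ (2 * (n - Int.natAbs ((r : ℤ) - n) + 1)) ∣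
      qPochhammer (X ^ 2) n * gaussBinom (X ^ 2) (2 * n) r - 1 := by
  rcases le_total n r with h | h
  · obtain ⟨d, rfl⟩ := Nat.exists_eq_add_of_le h
    rw [Nat.cast_add, add_sub_cancel_left, Int.natAbs_natCast]
    exact X_pow_dvd_qPochhammer_mul_gaussBinom_add_sub_one (by omega)
  · rw [← gaussBinom_symm (not_isOfFinOrder_X_pow (R := R) two_ne_zero) hr,
      show 2 * n - r = n + (n - r) by omega, show Int.natAbs ((r : ℤ) - n) = n - r by omega]
    exact X_pow_dvd_qPochhammer_mul_gaussBinom_add_sub_one (by omega)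

lemma coeff_qPochhammer_mul_gaussBinom_mul_X_pow {n r : ℕ} (hr : r ≤ 2 * n) :
    coeff n (qPochhammer (X ^ 2) n * gaussBinom (X ^ 2) (2 * n) r *
        (X : R⟦X⟧) ^ Int.natAbs ((r : ℤ) - n) ^ 2) =
      if Int.natAbs ((r : ℤ) - n) ^ 2 = n then 1 else 0 := by
  set d := Int.natAbs ((r : ℤ) - n)
  have hd : d ≤ n := by omega
  have hle : n + 1 ≤ 2 * (n - d + 1) + d ^ 2 := by
    zify [hd]
    nlinarith [sq_nonneg ((d : ℤ) - 1)]
  rw [coeff_eq_of_X_pow_dvd_sub (g := X ^ d ^ 2), coeff_X_pow]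
  · exact if_congr eq_comm rfl rfl
  rw [← sub_one_mul]
  exact (pow_dvd_pow X hle).trans (pow_add (X : R⟦X⟧) _ _ ▸
    mul_dvd_mul (X_pow_dvd_qPochhammer_mul_gaussBinom_sub_one hr) dvd_rfl)

theorem coeff_qPochhammer_mul_prod_one_add_X_pow_sq {n : ℕ} (hn : 0 < n) :
    coeff n (qPochhammer (X ^ 2) n * (∏ k ∈ range n, (1 + X ^ (2 * k + 1))) ^ 2 : R⟦X⟧) =
      if IsSquare n then 2 else 0 := by
  rw [prod_one_add_pow_sq_eq_sum_gaussBinom X_ne_zero, mul_sum, map_sum]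
  simp_rw [← mul_assoc]
  rw [sum_congr rfl fun r hr => coeff_qPochhammer_mul_gaussBinom_mul_X_pow (by grind), sum_boole,
    card_filter_natAbs_sub_sq_eq hn]
  split_ifs <;> simp

end CommRing

section Field

variable {k : Type*} [Field k]

lemma eta_factor_mul {j : ℕ} (hj : j ≠ 0) :
    (1 - X ^ (2 * j)) ^ 5 * ((1 - X ^ j) ^ 2 * (1 - X ^ (4 * j)) ^ 2)⁻¹ * (1 + X ^ (2 * j)) ^ 2 =
      ((1 - X ^ (2 * j)) * (1 + X ^ j) ^ 2 : k⟦X⟧) := by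
  have hD : constantCoeff ((1 - X ^ j) ^ 2 * (1 - X ^ (4 * j)) ^ 2 : k⟦X⟧) ≠ 0 := by
    simp [constantCoeff_one_sub_X_pow hj,
      constantCoeff_one_sub_X_pow (mul_ne_zero four_ne_zero hj)]
  rw [mul_right_comm, eq_comm, eq_mul_inv_iff_mul_eq hD]
  ring

theorem eta_prod_mul_sq (n : ℕ) :
    (∏ j ∈ Icc 1 n, (1 - X ^ (2 * j)) ^ 5 * ((1 - X ^ j) ^ 2 * (1 - X ^ (4 * j)) ^ 2)⁻¹) *
        (∏ j ∈ Ioc n (2 * n), (1 + X ^ j)) ^ 2 =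
      (qPochhammer (X ^ 2) n * (∏ j ∈ range n, (1 + X ^ (2 * j + 1))) ^ 2 : k⟦X⟧) := by
  set etaProd : k⟦X⟧ :=
    ∏ j ∈ Icc 1 n, (1 - X ^ (2 * j)) ^ 5 * ((1 - X ^ j) ^ 2 * (1 - X ^ (4 * j)) ^ 2)⁻¹
  set evenProd : k⟦X⟧ := ∏ j ∈ Ioc 0 n, (1 + X ^ (2 * j))
  have heta : etaProd * evenProd ^ 2 =
      qPochhammer (X ^ 2) n * (∏ j ∈ Ioc 0 n, (1 + X ^ j)) ^ 2 := by
    simp only [etaProd, evenProd]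
    rw [show Icc 1 n = Ioc 0 n from rfl, ← prod_pow, ← prod_pow, ← prod_mul_distrib,
      qPochhammer, ← prod_mul_distrib]
    exact prod_congr rfl fun j hj => by rw [eta_factor_mul (mem_Ioc.mp hj).1.ne', pow_mul]
  have hsplit : (∏ j ∈ Ioc 0 n, (1 + X ^ j)) * ∏ j ∈ Ioc n (2 * n), (1 + X ^ j) =
      evenProd * ∏ j ∈ range n, (1 + (X : k⟦X⟧) ^ (2 * j + 1)) := by
    rw [prod_Ioc_consecutive _ (Nat.zero_le n) (by omega), prod_Ioc_two_mul]
  have hevenProd : evenProd ≠ 0 := prod_ne_zero_iff.mpr fun j hj h => by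
    simpa [constantCoeff_one_add_X_pow (mul_ne_zero two_ne_zero (mem_Ioc.mp hj).1.ne')] using
      congr_arg constantCoeff h
  refine mul_right_cancel₀ (pow_ne_zero 2 hevenProd) ?_
  calc _ = etaProd * evenProd ^ 2 * (∏ j ∈ Ioc n (2 * n), (1 + X ^ j)) ^ 2 := by ring
    _ = qPochhammer (X ^ 2) n *
        ((∏ j ∈ Ioc 0 n, (1 + X ^ j)) * ∏ j ∈ Ioc n (2 * n), (1 + X ^ j)) ^ 2 := by
      rw [heta]; ring
    _ = _ := by rw [hsplit]; ring

end Field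

end PowerSeries

/- The `k`-th factor is `≡ 1 mod x^k`, so this coefficient of the partial product is the
coefficient of `xⁿ` of the infinite product. -/
open Classical in
theorem stmt7 (n : ℕ) :
    PowerSeries.coeff (R := ℚ) n
        (∏ k ∈ Finset.Icc 1 n,
          (1 - X ^ (2 * k)) ^ 5 * (((1 - X ^ k) ^ 2 * (1 - X ^ (4 * k)) ^ 2)⁻¹)) =
      if n = 0 then 1 else if IsSquare n then 2 else 0 := by
  rcases Nat.eq_zero_or_pos n with rfl | hn
  · simp
  rw [if_neg hn.ne', ← coeff_qPochhammer_mul_prod_one_add_X_pow_sq hn, ← eta_prod_mul_sq,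
    coeff_mul_eq_of_X_pow_dvd_sub_one (X_pow_dvd_prod_Ioc_one_add_X_pow_sq_sub_one n)]
end

section
/- Main recursion theorem (α = 1 case, Apostol): Let A ⊆ ℕ and f : A → ℂ be such that F(x) = ∏_{n∈A} (1−xⁿ)^{−f(n)/n} = Σ_{n≥0} p(n)xⁿ and Σ_{n∈A} (f(n)/n) xⁿ converge absolutely on |x|<1. Then for all n ≥ 1, n·p(n) = Σ_{k=1}^{n} p(n−k) f_A(k), where p(0)=1 and f_A(k) = Σ_{d|k, d∈A} f(d). -/
/-!
Taking logarithms factor by factor and expanding `-log (1 - xⁿ) = ∑ₘ xⁿᵐ / m`,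
`log F(x) = ∑_{n ∈ A} ∑_{m ≥ 1} (f(n) / n) xⁿᵐ / m`. The double series converges absolutely for
`|x| < 1`, and grouping its terms by `k = n m` gives `F = exp L` with
`L(x) = ∑ₖ (f_A(k) / k) xᵏ`. Hence `x F' = (x L') F`, and comparing the coefficients of `xⁿ`
(the left side has `n p(n)`, the right side the Cauchy product of `f_A` and `p`) is the recursion.
-/

open Complex FormalMultilinearSeries Finset
open scoped NNReal

section PowerSeries

variable {a b : ℕ → ℂ} {g h : ℂ → ℂ} {r : ℝ≥0}

theorem mem_eball_zero_iff_norm_lt {x : ℂ} : x ∈ Metric.eball (0 : ℂ) r ↔ ‖x‖ < r := by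
  rw [Metric.eball_coe, mem_ball_zero_iff]

theorem hasFPowerSeriesOnBall_ofScalars_of_hasSum (hr : 0 < r)
    (hsum : ∀ x : ℂ, ‖x‖ < r → HasSum (fun n => a n * x ^ n) (g x)) :
    HasFPowerSeriesOnBall g (ofScalars ℂ a) 0 r where
  r_le := by
    refine ENNReal.le_of_forall_nnreal_lt fun s hs =>
      (ofScalars ℂ a).le_radius_of_tendsto (l := 0) ?_
    have hs' : ‖(s : ℂ)‖ < r := by simpa using hs
    simpa [ofScalars_norm] using (hsum s hs').summable.tendsto_atTop_zero.norm
  r_pos := by simpa using hr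
  hasSum {x} hx := by
    simpa [ofScalars_apply_eq, mul_comm] using hsum x (mem_eball_zero_iff_norm_lt.mp hx)

theorem HasFPowerSeriesOnBall.ofScalars_unique (ha : HasFPowerSeriesOnBall g (ofScalars ℂ a) 0 r)
    (hb : HasFPowerSeriesOnBall g (ofScalars ℂ b) 0 r) : a = b :=
  (ofScalars_series_eq_iff ℂ a b).mp <|
    ha.hasFPowerSeriesAt.eq_formalMultilinearSeries hb.hasFPowerSeriesAt

theorem HasFPowerSeriesOnBall.hasSum_ofScalars (hg : HasFPowerSeriesOnBall g (ofScalars ℂ a) 0 r)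
    {x : ℂ} (hx : ‖x‖ < r) : HasSum (fun n => a n * x ^ n) (g x) := by
  simpa [ofScalars_apply_eq, mul_comm] using hg.hasSum (mem_eball_zero_iff_norm_lt.mpr hx)

theorem HasFPowerSeriesOnBall.summable_norm_ofScalars
    (hg : HasFPowerSeriesOnBall g (ofScalars ℂ a) 0 r) {x : ℂ} (hx : ‖x‖ < r) :
    Summable fun n => ‖a n * x ^ n‖ := by
  have hx' : x ∈ Metric.eball (0 : ℂ) (ofScalars ℂ a).radius :=
    Metric.eball_subset_eball hg.r_le (mem_eball_zero_iff_norm_lt.mpr hx)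
  simpa [ofScalars_apply_eq, mul_comm] using (ofScalars ℂ a).summable_norm_apply hx'

theorem HasFPowerSeriesOnBall.mul_ofScalars (hg : HasFPowerSeriesOnBall g (ofScalars ℂ a) 0 r)
    (hh : HasFPowerSeriesOnBall h (ofScalars ℂ b) 0 r) :
    HasFPowerSeriesOnBall (fun x => g x * h x)
      (ofScalars ℂ fun n => ∑ ij ∈ antidiagonal n, a ij.1 * b ij.2) 0 r := by
  refine hasFPowerSeriesOnBall_ofScalars_of_hasSum (by simpa using hg.r_pos) fun x hx => ?_
  have ha := hg.summable_norm_ofScalars hx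
  have hb := hh.summable_norm_ofScalars hx
  have hprod := (summable_norm_sum_mul_antidiagonal_of_summable_norm ha hb).of_norm.hasSum
  rw [← tsum_mul_tsum_eq_tsum_sum_antidiagonal_of_summable_norm ha hb,
    (hg.hasSum_ofScalars hx).tsum_eq, (hh.hasSum_ofScalars hx).tsum_eq] at hprod
  refine hprod.congr_fun fun n => ?_
  rw [sum_mul]
  refine sum_congr rfl fun ij hij => ?_
  rw [← mem_antidiagonal.mp hij, pow_add]
  ring

theorem HasFPowerSeriesOnBall.mul_deriv_ofScalars
    (hg : HasFPowerSeriesOnBall g (ofScalars ℂ a) 0 r) :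
    HasFPowerSeriesOnBall (fun x => x * deriv g x) (ofScalars ℂ fun n => n * a n) 0 r := by
  refine hasFPowerSeriesOnBall_ofScalars_of_hasSum (by simpa using hg.r_pos) fun x hx => ?_
  have hs := (ContinuousLinearMap.apply ℂ ℂ x).hasSum
    (hg.fderiv.hasSum (mem_eball_zero_iff_norm_lt.mpr hx))
  simp only [ContinuousLinearMap.apply_apply, zero_add, derivSeries_apply_diag,
    ofScalars_apply_eq] at hs
  have hfderiv : fderiv ℂ g x x = x * deriv g x := by simp
  rw [hfderiv] at hs
  simpa using (hasSum_nat_add_iff (f := fun n : ℕ => (n : ℂ) * a n * x ^ n) 1).mp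
    (by simpa [nsmul_eq_mul, mul_assoc] using hs)

end PowerSeries

section LambertLog

theorem HasSum.sum_divisorsAntidiagonal {E : Type*} [NormedAddCommGroup E] [CompleteSpace E]
    {g : ℕ × ℕ → E} {s : E} (hg : HasSum g s) (h0 : ∀ q : ℕ × ℕ, q.1 * q.2 = 0 → g q = 0) :
    HasSum (fun k : ℕ => ∑ q ∈ k.divisorsAntidiagonal, g q) s := by
  refine (hg.tsum_fiberwise fun q => q.1 * q.2).congr_fun fun k => ?_
  rw [_root_.tsum_subtype, tsum_eq_sum (s := k.divisorsAntidiagonal)]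
  · refine sum_congr rfl fun q hq => (Set.indicator_of_mem ?_ g).symm
    exact (Nat.mem_divisorsAntidiagonal.mp hq).1
  · refine fun q hq => Set.indicator_apply_eq_zero.mpr fun hqk => h0 q ?_
    by_contra hne
    exact hq (Nat.mem_divisorsAntidiagonal.mpr ⟨hqk, (hqk : q.1 * q.2 = k) ▸ hne⟩)

variable {b : ℕ → ℂ} {x : ℂ}

/-- The terms of `∑ n, (b n / n) * (-log (1 - x ^ n)) = ∑ n, ∑ m, (b n / n) * x ^ (n * m) / m`. -/
noncomputable def logDoubleSeries (b : ℕ → ℂ) (x : ℂ) (q : ℕ × ℕ) : ℂ :=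
  b q.1 / q.1 * x ^ (q.1 * q.2) / q.2

theorem logDoubleSeries_eq_zero_of_mul_eq_zero {q : ℕ × ℕ} (hq : q.1 * q.2 = 0) :
    logDoubleSeries b x q = 0 := by
  rcases Nat.mul_eq_zero.mp hq with h | h <;> simp [logDoubleSeries, h]

theorem summable_norm_logDoubleSeries (hx : ‖x‖ < 1)
    (hb : Summable fun n => ‖b n / n * x ^ n‖) :
    Summable fun q => ‖logDoubleSeries b x q‖ := by
  have hgeom : Summable fun m => ‖x‖ ^ (m - 1) :=
    (summable_nat_add_iff 1).mp (by simpa using summable_geometric_of_lt_one (norm_nonneg x) hx)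
  refine (hb.mul_of_nonneg hgeom (fun _ => norm_nonneg _) fun _ => by positivity).of_nonneg_of_le
    (fun _ => norm_nonneg _) ?_
  rintro ⟨n, m⟩
  rcases Nat.eq_zero_or_pos n with rfl | hn
  · simp [logDoubleSeries]
  rcases Nat.eq_zero_or_pos m with rfl | hm
  · simp only [logDoubleSeries, Nat.cast_zero, div_zero, norm_zero]
    positivity
  have hexp : n + (m - 1) ≤ n * m := by
    obtain ⟨m, rfl⟩ := Nat.exists_eq_add_of_lt hm
    simpa [mul_add, add_comm] using Nat.le_mul_of_pos_left m hn
  calc ‖b n / n * x ^ (n * m) / m‖ ≤ ‖b n / n‖ * ‖x‖ ^ (n * m) := by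
        rw [norm_div, norm_mul, norm_pow, Complex.norm_natCast]
        exact div_le_self (by positivity) (by exact_mod_cast hm)
    _ ≤ ‖b n / n‖ * ‖x‖ ^ (n + (m - 1)) :=
        mul_le_mul_of_nonneg_left (pow_le_pow_of_le_one (norm_nonneg x) hx.le hexp)
          (norm_nonneg _)
    _ = ‖b n / n * x ^ n‖ * ‖x‖ ^ (m - 1) := by rw [pow_add, norm_mul, norm_pow, mul_assoc]

theorem hasSum_logDoubleSeries_row (hx : ‖x‖ < 1) (n : ℕ) :
    HasSum (fun m => logDoubleSeries b x (n, m)) (b n / n * -log (1 - x ^ n)) := by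
  rcases eq_or_ne n 0 with rfl | hn
  · simp [logDoubleSeries]
  have hxn : ‖x ^ n‖ < 1 := by
    rw [norm_pow]
    exact pow_lt_one₀ (norm_nonneg x) hx hn
  refine ((hasSum_taylorSeries_neg_log hxn).mul_left (b n / n)).congr_fun fun m => ?_
  rw [logDoubleSeries, pow_mul, mul_div_assoc]

theorem sum_divisorsAntidiagonal_logDoubleSeries (k : ℕ) :
    ∑ q ∈ k.divisorsAntidiagonal, logDoubleSeries b x q =
      (∑ d ∈ k.divisors, b d) / k * x ^ k := by
  rw [sum_div, sum_mul, ← Nat.sum_divisorsAntidiagonal (fun d _ => b d / k * x ^ k)]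
  refine sum_congr rfl fun q hq => ?_
  obtain ⟨hqk, hk⟩ := Nat.mem_divisorsAntidiagonal.mp hq
  have hq1 : (q.1 : ℂ) ≠ 0 := by exact_mod_cast (Nat.ne_zero_of_mul_ne_zero_left (hqk ▸ hk))
  have hq2 : (q.2 : ℂ) ≠ 0 := by exact_mod_cast (Nat.ne_zero_of_mul_ne_zero_right (hqk ▸ hk))
  rw [logDoubleSeries, ← hqk, Nat.cast_mul]
  field_simp

theorem hasSum_divisors_sum_div_mul_pow (hx : ‖x‖ < 1)
    (hb : Summable fun n => ‖b n / n * x ^ n‖) :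
    HasSum (fun k : ℕ => (∑ d ∈ k.divisors, b d) / k * x ^ k) (∑' q, logDoubleSeries b x q) := by
  refine ((summable_norm_logDoubleSeries hx hb).of_norm.hasSum.sum_divisorsAntidiagonal
    fun q => logDoubleSeries_eq_zero_of_mul_eq_zero).congr_fun fun k => ?_
  exact (sum_divisorsAntidiagonal_logDoubleSeries k).symm

theorem hasSum_div_mul_neg_log_one_sub_pow (hx : ‖x‖ < 1)
    (hb : Summable fun n => ‖b n / n * x ^ n‖) :
    HasSum (fun n => b n / n * -log (1 - x ^ n))
      (∑' k : ℕ, (∑ d ∈ k.divisors, b d) / k * x ^ k) := by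
  rw [(hasSum_divisors_sum_div_mul_pow hx hb).tsum_eq]
  exact (summable_norm_logDoubleSeries hx hb).of_norm.hasSum.prod_fiberwise
    (hasSum_logDoubleSeries_row hx)

-- At `n = 0` both sides are `1`, because `c / 0 = 0`.
theorem one_sub_pow_cpow_neg_div_eq_exp (hx : ‖x‖ < 1) (c : ℂ) (n : ℕ) :
    (1 - x ^ n) ^ (-(c / n)) = exp (c / n * -log (1 - x ^ n)) := by
  rcases eq_or_ne n 0 with rfl | hn
  · simp
  have hxn : x ^ n ≠ 1 := fun h => by
    simpa [← norm_pow, h] using pow_lt_one₀ (norm_nonneg x) hx hn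
  rw [cpow_def_of_ne_zero (sub_ne_zero.mpr hxn.symm)]
  ring_nf

theorem summable_norm_indicator_div_mul_pow {A : Set ℕ} {f : ℕ → ℂ}
    (h : Summable fun n : A => ‖f n / (n : ℕ) * x ^ (n : ℕ)‖) :
    Summable fun n => ‖A.indicator f n / n * x ^ n‖ :=
  ((summable_subtype_iff_indicator (f := fun n : ℕ => ‖f n / n * x ^ n‖)).mp h).congr
    fun n => by by_cases hn : n ∈ A <;> simp [hn]

theorem hasProd_one_sub_pow_cpow_neg_div {A : Set ℕ} {f : ℕ → ℂ} (hx : ‖x‖ < 1)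
    (h : Summable fun n : A => ‖f n / (n : ℕ) * x ^ (n : ℕ)‖) :
    HasProd (fun n : A => (1 - x ^ (n : ℕ)) ^ (-(f n / (n : ℕ))))
      (exp (∑' k : ℕ, (∑ d ∈ k.divisors, A.indicator f d) / k * x ^ k)) := by
  have hlog := hasSum_div_mul_neg_log_one_sub_pow hx (summable_norm_indicator_div_mul_pow h)
  replace hlog : HasSum (A.indicator fun n => f n / n * -log (1 - x ^ n)) _ :=
    hlog.congr_fun fun n => by by_cases hn : n ∈ A <;> simp [hn]
  exact (hasSum_subtype_iff_indicator.mpr hlog).cexp.congr_fun fun n =>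
    one_sub_pow_cpow_neg_div_eq_exp hx _ _

end LambertLog

theorem deriv_eq_deriv_mul_of_eqOn_exp {F L : ℂ → ℂ} {s : Set ℂ} (hs : IsOpen s)
    (hL : DifferentiableOn ℂ L s) (hF : Set.EqOn F (exp ∘ L) s) {x : ℂ} (hx : x ∈ s) :
    deriv F x = deriv L x * F x := by
  have hFL : F =ᶠ[nhds x] exp ∘ L := Filter.eventually_of_mem (hs.mem_nhds hx) hF
  rw [(((hL.differentiableAt (hs.mem_nhds hx)).hasDerivAt.cexp).congr_of_eventuallyEq hFL).deriv,
    hF hx, Function.comp_apply, mul_comm]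

theorem Finset.Nat.sum_antidiagonal_eq_sum_Icc {M : Type*} [CommSemiring M] (g q : ℕ → M)
    (hg : g 0 = 0) (n : ℕ) :
    ∑ ij ∈ antidiagonal n, g ij.1 * q ij.2 = ∑ k ∈ Icc 1 n, q (n - k) * g k := by
  rw [Nat.sum_antidiagonal_eq_sum_range_succ (fun i j => g i * q j)]
  refine (sum_subset (fun k hk => by simp at hk ⊢; omega) fun k hk hk' => ?_).symm.trans
    (sum_congr rfl fun k _ => mul_comm _ _)
  obtain rfl : k = 0 := by simp at hk hk'; omega
  simp [hg]

theorem stmt14_general (A : Set ℕ) (f : ℕ → ℂ) (p : ℕ → ℂ) (F : ℂ → ℂ)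
    (hprod : ∀ x : ℂ, ‖x‖ < 1 →
      HasProd (fun n : A => (1 - x ^ (n : ℕ)) ^ (-(f n / ((n : ℕ) : ℂ)))) (F x))
    (hF : ∀ x : ℂ, ‖x‖ < 1 → HasSum (fun n : ℕ => p n * x ^ n) (F x))
    (hG : ∀ x : ℂ, ‖x‖ < 1 → Summable (fun n : A => ‖f n / ((n : ℕ) : ℂ) * x ^ (n : ℕ)‖)) :
    ∀ n : ℕ, 1 ≤ n →
      (n : ℂ) * p n = ∑ k ∈ Finset.Icc 1 n, p (n - k) * ∑ d ∈ k.divisors, A.indicator f d := by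
  set fA : ℕ → ℂ := fun k => ∑ d ∈ k.divisors, A.indicator f d
  set L : ℂ → ℂ := fun x => ∑' k : ℕ, fA k / k * x ^ k
  have hLser : HasFPowerSeriesOnBall L (ofScalars ℂ fun k => fA k / k) 0 (1 : ℝ≥0) :=
    hasFPowerSeriesOnBall_ofScalars_of_hasSum one_pos fun x hx =>
      (hasSum_divisors_sum_div_mul_pow (by simpa using hx)
        (summable_norm_indicator_div_mul_pow (hG x (by simpa using hx)))).summable.hasSum
  have hFser : HasFPowerSeriesOnBall F (ofScalars ℂ p) 0 (1 : ℝ≥0) :=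
    hasFPowerSeriesOnBall_ofScalars_of_hasSum one_pos fun x hx => hF x (by simpa using hx)
  have hFexp : Set.EqOn F (exp ∘ L) (Metric.eball 0 (1 : ℝ≥0)) := fun x hx => by
    have hx : ‖x‖ < 1 := by simpa using mem_eball_zero_iff_norm_lt.mp hx
    exact (hprod x hx).unique (hasProd_one_sub_pow_cpow_neg_div hx (hG x hx))
  have hderiv : Set.EqOn (fun x => x * deriv L x * F x) (fun x => x * deriv F x)
      (Metric.eball 0 (1 : ℝ≥0)) := fun x hx => by
    simp only [deriv_eq_deriv_mul_of_eqOn_exp Metric.isOpen_eball hLser.differentiableOn hFexp hx,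
      mul_assoc]
  have hcoeff := hFser.mul_deriv_ofScalars.ofScalars_unique
    ((hLser.mul_deriv_ofScalars.mul_ofScalars hFser).congr hderiv)
  intro n _
  rw [congrFun hcoeff n,
    Finset.Nat.sum_antidiagonal_eq_sum_Icc (fun k => (k : ℂ) * (fA k / k)) p (by simp)]
  refine sum_congr rfl fun k hk => ?_
  have hk : (k : ℂ) ≠ 0 := by simp at hk; exact_mod_cast (by omega : k ≠ 0)
  rw [mul_div_cancel₀ _ hk]

theorem stmt14 (A : Set ℕ) (hA : 0 ∉ A) (f : ℕ → ℂ) (p : ℕ → ℂ) (F : ℂ → ℂ)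
    (hp0 : p 0 = 1)
    (hprod : ∀ x : ℂ, ‖x‖ < 1 →
      HasProd (fun n : A => (1 - x ^ (n : ℕ)) ^ (-(f n / ((n : ℕ) : ℂ)))) (F x))
    (hF : ∀ x : ℂ, ‖x‖ < 1 → HasSum (fun n : ℕ => p n * x ^ n) (F x))
    (hFabs : ∀ x : ℂ, ‖x‖ < 1 → Summable (fun n : ℕ => ‖p n * x ^ n‖))
    (hG : ∀ x : ℂ, ‖x‖ < 1 → Summable (fun n : A => ‖f n / ((n : ℕ) : ℂ) * x ^ (n : ℕ)‖)) :
    ∀ n : ℕ, 1 ≤ n →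
      (n : ℂ) * p n = ∑ k ∈ Finset.Icc 1 n, p (n - k) * ∑ d ∈ k.divisors, A.indicator f d :=
  stmt14_general A f p F hprod hF hG
end
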